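/- arXiv:2011.09132 — 2 statements merged into one kernel-verified Lean document; each statement's English description precedes it below -/
import Mathlib

section
/- Let X and Y be Fréchet spaces and let f : X → Y be a continuous linear map. If the range of f has finite codimension in Y, i.e. the quotient vector space Y ⧸ (range of f) is finite-dimensional over ℝ, then the range of f is a closed subspace of Y. -/
/-!
Choose an algebraic complement `q` of `range f`. It is finite-dimensional, hence complete, so
`g : X × q → Y, (x, m) ↦ f x + m` is a continuous linear surjection between complete metrizable
spaces. By the open mapping theorem `g` is a quotient map, and `range f` is closed because its
preimage under `g` is `X × {0}`.

For the open mapping theorem, given `U ∈ 𝓝 0` take `V` with `V - V ⊆ U`. By Baire the closed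
absorbent set `D = closure (g '' V)` has an interior point `d`, so `closure (g '' U) ⊇ D - D` is a
neighbourhood of `d - d = 0`. Successive approximation along neighbourhoods with
`V (n + 1) + V (n + 1) ⊆ V n` then removes the closure: the corrections form a series that
converges by completeness.
-/

open Filter Topology Set
open scoped Pointwise

section HalvingSequence

variable {E : Type*} {V : ℕ → Set E}

theorem antitone_of_add_subset [AddZeroClass E] (h0 : ∀ n, (0 : E) ∈ V n)
    (hadd : ∀ n, V (n + 1) + V (n + 1) ⊆ V n) : Antitone V :=
  antitone_nat_of_succ_le fun n x hx => by simpa using hadd n (add_mem_add hx (h0 (n + 1)))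

theorem sum_mem_of_add_subset [AddCommMonoid E] (h0 : ∀ n, (0 : E) ∈ V n)
    (hadd : ∀ n, V (n + 1) + V (n + 1) ⊆ V n) {z : ℕ → E} (hz : ∀ n, z n ∈ V (n + 1))
    (t : Finset ℕ) {k : ℕ} (ht : ∀ i ∈ t, k ≤ i) : ∑ i ∈ t, z i ∈ V k := by
  induction t using Finset.induction_on_min generalizing k with
  | empty => simpa using h0 k
  | insert a s has ih =>
    rw [Finset.sum_insert fun ha => (has a ha).false]
    have hsum : z a + ∑ i ∈ s, z i ∈ V a :=
      hadd a (add_mem_add (hz a) (ih fun i hi => has i hi))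
    exact antitone_of_add_subset h0 hadd (ht a (Finset.mem_insert_self a s)) hsum

theorem summable_of_add_subset [AddCommGroup E] [UniformSpace E] [IsUniformAddGroup E]
    [CompleteSpace E] (hV : (𝓝 (0 : E)).HasAntitoneBasis V)
    (hadd : ∀ n, V (n + 1) + V (n + 1) ⊆ V n) {z : ℕ → E} (hz : ∀ n, z n ∈ V (n + 1)) :
    Summable z := by
  have h0 : ∀ n, (0 : E) ∈ V n := fun n => mem_of_mem_nhds (hV.mem n)
  refine summable_iff_vanishing.2 fun e he => ?_
  obtain ⟨n, hn⟩ := hV.mem_iff.1 he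
  refine ⟨Finset.range n, fun t ht => hn (sum_mem_of_add_subset h0 hadd hz t fun i hi => ?_)⟩
  simpa using Finset.disjoint_left.1 ht hi

theorem exists_nhds_zero_antitoneBasis_add_subset [AddMonoid E] [TopologicalSpace E]
    [ContinuousAdd E] [(𝓝 (0 : E)).IsCountablyGenerated] {U : Set E} (hU : U ∈ 𝓝 0) :
    ∃ V : ℕ → Set E, (𝓝 (0 : E)).HasAntitoneBasis V ∧
      (∀ n, V (n + 1) + V (n + 1) ⊆ V n) ∧ V 0 ⊆ U := by
  obtain ⟨W, hW⟩ := (𝓝 (0 : E)).exists_antitone_basis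
  have exists_half : ∀ s ∈ 𝓝 (0 : E), ∃ t ∈ 𝓝 (0 : E), t + t ⊆ s := fun s hs => by
    obtain ⟨t, ht, hts⟩ := exists_nhds_zero_half hs
    exact ⟨t, ht, add_subset_iff.2 hts⟩
  choose! half half_mem half_add using exists_half
  let V : ℕ → Set E := fun n => Nat.rec (U ∩ W 0) (fun n s => half s ∩ W (n + 1)) n
  have hV0 : ∀ n, V n ∈ 𝓝 0 := fun n => by
    induction n with
    | zero => exact inter_mem hU (hW.mem 0)
    | succ n ih => exact inter_mem (half_mem _ ih) (hW.mem (n + 1))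
  have hadd : ∀ n, V (n + 1) + V (n + 1) ⊆ V n := fun n =>
    (add_subset_add inter_subset_left inter_subset_left).trans (half_add _ (hV0 n))
  have hVW : ∀ n, V n ⊆ W n := fun n => by cases n <;> exact inter_subset_right
  refine ⟨V, ⟨⟨fun s => ?_⟩, antitone_of_add_subset (fun n => mem_of_mem_nhds (hV0 n)) hadd⟩,
    hadd, inter_subset_left⟩
  refine ⟨fun hs => ?_, fun ⟨n, _, hn⟩ => mem_of_superset (hV0 n) hn⟩
  obtain ⟨n, hn⟩ := hW.mem_iff.1 hs
  exact ⟨n, trivial, (hVW n).trans hn⟩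

end HalvingSequence

section Baire

variable {𝕜 E F : Type*} [NontriviallyNormedField 𝕜]

theorem Absorbent.nonempty_interior_of_isClosed [AddCommGroup E] [Module 𝕜 E]
    [TopologicalSpace E] [ContinuousConstSMul 𝕜 E] [BaireSpace E] {A : Set E} (hA : Absorbent 𝕜 A)
    (hAc : IsClosed A) : (interior A).Nonempty := by
  obtain ⟨c, hc⟩ := NormedField.exists_one_lt_norm 𝕜
  have hc0 : ∀ n : ℕ, c ^ n ≠ 0 := fun n =>
    pow_ne_zero n (norm_pos_iff.1 (one_pos.trans hc))
  have hpow : Tendsto (c ^ ·) atTop (Bornology.cobounded 𝕜) := by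
    rw [← tendsto_norm_atTop_iff_cobounded]
    simpa using tendsto_pow_atTop_atTop_of_one_lt hc
  have hcover : ⋃ n : ℕ, c ^ n • A = univ := eq_univ_of_forall fun x => by
    obtain ⟨n, hn⟩ := (hpow.eventually (hA x)).exists
    exact mem_iUnion.2 ⟨n, hn rfl⟩
  obtain ⟨n, hn⟩ := nonempty_interior_of_iUnion_of_closed
    (fun n => hAc.smul_of_ne_zero (hc0 n)) hcover
  rw [interior_smul₀ (hc0 n)] at hn
  exact Set.smul_set_nonempty.1 hn

theorem LinearMap.closure_image_mem_nhds_zero_of_surjective [AddCommGroup E] [Module 𝕜 E]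
    [TopologicalSpace E] [IsTopologicalAddGroup E] [ContinuousSMul 𝕜 E]
    [AddCommGroup F] [Module 𝕜 F] [TopologicalSpace F] [IsTopologicalAddGroup F]
    [ContinuousConstSMul 𝕜 F] [BaireSpace F] (g : E →ₗ[𝕜] F) (hg : Function.Surjective g)
    {U : Set E} (hU : U ∈ 𝓝 0) : closure (g '' U) ∈ 𝓝 0 := by
  obtain ⟨V, hV, hVU⟩ := exists_nhds_half_neg hU
  have habs : Absorbent 𝕜 (closure (g '' V)) := by
    refine Absorbent.mono (absorbent_iff_inv_smul.2 fun y => ?_) subset_closure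
    obtain ⟨x, rfl⟩ := hg y
    filter_upwards [absorbent_iff_inv_smul.1 (absorbent_nhds_zero (𝕜 := 𝕜) hV) x] with c hc
    exact ⟨c⁻¹ • x, hc, map_smul g _ _⟩
  obtain ⟨d, hd⟩ := habs.nonempty_interior_of_isClosed isClosed_closure
  refine mem_of_superset (isOpen_interior.sub_left.mem_nhds ⟨d, hd, d, hd, sub_self d⟩) ?_
  rintro _ ⟨a, ha, b, hb, rfl⟩
  refine map_mem_closure₂ continuous_sub (interior_subset ha) (interior_subset hb) ?_
  rintro _ ⟨v, hv, rfl⟩ _ ⟨w, hw, rfl⟩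
  exact ⟨v - w, hVU v hv w hw, map_sub g v w⟩

end Baire

section SuccessiveApproximation

variable {E F : Type*} [AddCommGroup F] [TopologicalSpace F] [IsTopologicalAddGroup F]
  {V : ℕ → Set E} {g : E → F}

theorem exists_seq_sub_sum_mem_closure_image (hcl : ∀ n, closure (g '' V n) ∈ 𝓝 0) {y : F}
    (hy : y ∈ closure (g '' V 1)) :
    ∃ z : ℕ → E, (∀ n, z n ∈ V (n + 1)) ∧
      ∀ n, y - ∑ i ∈ Finset.range n, g (z i) ∈ closure (g '' V (n + 1)) := by
  have : Nonempty E := by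
    obtain ⟨_, x, -, -⟩ := closure_nonempty_iff.1 ⟨y, hy⟩
    exact ⟨x⟩
  have step : ∀ n, ∀ w ∈ closure (g '' V (n + 1)),
      ∃ x ∈ V (n + 1), w - g x ∈ closure (g '' V (n + 2)) := fun n w hw => by
    obtain ⟨_, ⟨x, hx, rfl⟩, hxw⟩ :=
      mem_closure_iff_nhds_zero.1 hw _ (neg_mem_nhds_zero F (hcl (n + 2)))
    exact ⟨x, hx, by simpa using hxw⟩
  choose! x hxV hxres using step
  let r : ℕ → F := fun n => Nat.rec y (fun n w => w - g (x n w)) n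
  have hr : ∀ n, r n ∈ closure (g '' V (n + 1)) := fun n => by
    induction n with
    | zero => exact hy
    | succ n ih => exact hxres n _ ih
  refine ⟨fun n => x n (r n), fun n => hxV n _ (hr n), fun n => ?_⟩
  suffices r n = y - ∑ i ∈ Finset.range n, g (x i (r i)) from this ▸ hr n
  induction n with
  | zero => simp [r]
  | succ n ih => rw [Finset.sum_range_succ, sub_add_eq_sub_sub, ← ih]

theorem tendsto_zero_of_mem_closure_image [Zero E] [TopologicalSpace E]
    (hV : (𝓝 (0 : E)).HasAntitoneBasis V) (hg : ContinuousAt g 0) (hg0 : g 0 = 0) {r : ℕ → F}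
    (hr : ∀ n, r n ∈ closure (g '' V n)) : Tendsto r atTop (𝓝 0) := by
  rw [(closed_nhds_basis (0 : F)).tendsto_right_iff]
  rintro N ⟨hN, hNc⟩
  obtain ⟨m, hm⟩ := hV.mem_iff.1 (hg.preimage_mem_nhds (hg0 ▸ hN))
  filter_upwards [eventually_ge_atTop m] with n hn
  exact hNc.closure_subset_iff.2 (image_subset_iff.2 ((hV.antitone hn).trans hm)) (hr n)

end SuccessiveApproximation

section OpenMapping

variable {𝕜 E F : Type*} [NontriviallyNormedField 𝕜]
  [AddCommGroup E] [UniformSpace E] [IsUniformAddGroup E] [FirstCountableTopology E]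
  [CompleteSpace E] [AddCommGroup F] [TopologicalSpace F] [IsTopologicalAddGroup F] [T2Space F]

theorem AddMonoidHom.image_mem_nhds_zero_of_closure_image_mem_nhds_zero (g : E →+ F)
    (hg : Continuous g) (hcl : ∀ U ∈ 𝓝 (0 : E), closure (g '' U) ∈ 𝓝 0) {U : Set E}
    (hU : U ∈ 𝓝 0) : g '' U ∈ 𝓝 0 := by
  obtain ⟨C, hC, hCc, hCU⟩ := exists_mem_nhds_isClosed_subset hU
  obtain ⟨V, hV, hadd, hVC⟩ := exists_nhds_zero_antitoneBasis_add_subset hC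
  have h0 : ∀ n, (0 : E) ∈ V n := fun n => mem_of_mem_nhds (hV.mem n)
  refine mem_of_superset (hcl _ (hV.mem 1)) fun y hy => ?_
  obtain ⟨z, hz, hres⟩ := exists_seq_sub_sum_mem_closure_image (fun n => hcl _ (hV.mem n)) hy
  have hsum : HasSum z (∑' i, z i) := (summable_of_add_subset hV hadd hz).hasSum
  have hmem : ∑' i, z i ∈ closure (V 0) := mem_closure_of_tendsto hsum
    (Eventually.of_forall fun t => sum_mem_of_add_subset h0 hadd hz t fun i _ => i.zero_le)
  refine ⟨∑' i, z i, hCU (hCc.closure_subset_iff.2 hVC hmem), tendsto_nhds_unique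
    (hsum.map g hg).tendsto_sum_nat ?_⟩
  have hres0 := tendsto_zero_of_mem_closure_image hV hg.continuousAt (map_zero g)
    fun n => closure_mono (image_mono (hV.antitone n.le_succ)) (hres n)
  simpa using hres0.const_sub y

theorem ContinuousLinearMap.isOpenMap_of_baireSpace [Module 𝕜 E] [ContinuousSMul 𝕜 E]
    [Module 𝕜 F] [ContinuousConstSMul 𝕜 F] [BaireSpace F] (g : E →L[𝕜] F)
    (hg : Function.Surjective g) : IsOpenMap g := by
  refine IsTopologicalAddGroup.isOpenMap_iff_nhds_zero.2 fun U hU => ?_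
  have hcl : ∀ U ∈ 𝓝 (0 : E), closure (g '' U) ∈ 𝓝 0 := fun _ =>
    (g : E →ₗ[𝕜] F).closure_image_mem_nhds_zero_of_surjective hg
  exact mem_of_superset ((g : E →+ F).image_mem_nhds_zero_of_closure_image_mem_nhds_zero
    g.continuous hcl hU) (image_preimage_subset g U)

end OpenMapping

theorem ContinuousLinearMap.isClosed_range_of_isCompl {𝕜 E F : Type*}
    [NontriviallyNormedField 𝕜]
    [AddCommGroup E] [Module 𝕜 E] [UniformSpace E] [IsUniformAddGroup E] [ContinuousSMul 𝕜 E]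
    [FirstCountableTopology E] [CompleteSpace E]
    [AddCommGroup F] [Module 𝕜 F] [UniformSpace F] [IsUniformAddGroup F] [ContinuousSMul 𝕜 F]
    [FirstCountableTopology F] [T2Space F] [BaireSpace F]
    (f : E →L[𝕜] F) {q : Submodule 𝕜 F} (hq : IsCompl (LinearMap.range (f : E →ₗ[𝕜] F)) q)
    [CompleteSpace q] : IsClosed (LinearMap.range (f : E →ₗ[𝕜] F) : Set F) := by
  let g : E × q →L[𝕜] F := f.coprod q.subtypeL
  have hg : Function.Surjective g := fun y => by
    obtain ⟨_, ⟨x, rfl⟩, m, hm, rfl⟩ := Submodule.mem_sup.1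
      (hq.sup_eq_top ▸ Submodule.mem_top : y ∈ LinearMap.range (f : E →ₗ[𝕜] F) ⊔ q)
    exact ⟨(x, ⟨m, hm⟩), rfl⟩
  have hpre : g ⁻¹' LinearMap.range (f : E →ₗ[𝕜] F) = {p | p.2 = 0} := by
    ext ⟨x, m⟩
    change (f : E →ₗ[𝕜] F) x + (m : F) ∈ LinearMap.range (f : E →ₗ[𝕜] F) ↔ m = 0
    rw [Submodule.add_mem_iff_right _ (LinearMap.mem_range_self _ x), ← Submodule.coe_eq_zero]
    exact ⟨fun h => Submodule.disjoint_def.1 hq.disjoint _ h m.2, fun h => h ▸ zero_mem _⟩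
  have : IsUniformAddGroup q := q.toAddSubgroup.isUniformAddGroup
  have : FirstCountableTopology q := inferInstanceAs (FirstCountableTopology (q : Set F))
  have hquot : IsQuotientMap g :=
    (g.isOpenMap_of_baireSpace hg).isQuotientMap g.continuous hg
  rw [← hquot.isCoinducing.isClosed_preimage, hpre]
  exact isClosed_eq continuous_snd continuous_const

theorem range_isClosed_of_finiteCodim_general
    {X Y : Type*}
    [AddCommGroup X] [Module ℝ X] [UniformSpace X] [IsUniformAddGroup X]
    [ContinuousSMul ℝ X]
    [TopologicalSpace.MetrizableSpace X] [CompleteSpace X]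
    [AddCommGroup Y] [Module ℝ Y] [UniformSpace Y] [IsUniformAddGroup Y]
    [ContinuousSMul ℝ Y]
    [TopologicalSpace.MetrizableSpace Y] [CompleteSpace Y]
    (f : X →L[ℝ] Y)
    (h : FiniteDimensional ℝ (Y ⧸ LinearMap.range (f : X →ₗ[ℝ] Y))) :
    IsClosed (LinearMap.range (f : X →ₗ[ℝ] Y) : Set Y) := by
  obtain ⟨q, hq⟩ := Submodule.exists_isCompl (LinearMap.range (f : X →ₗ[ℝ] Y))
  have : FiniteDimensional ℝ q := (Submodule.quotientEquivOfIsCompl _ q hq).finiteDimensional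
  have : CompleteSpace q := q.complete_of_finiteDimensional.completeSpace_coe
  have := IsUniformAddGroup.uniformity_countably_generated (α := Y)
  exact f.isClosed_range_of_isCompl hq

/-- A Fréchet space: a locally convex, metrizable, Hausdorff, complete
topological vector space over ℝ.  If `f : X → Y` is a continuous linear map
between Fréchet spaces whose range has finite codimension in `Y`
(i.e. `Y ⧸ range f` is finite-dimensional over ℝ), then the range of `f`
is closed in `Y`. -/
theorem range_isClosed_of_finiteCodim
    {X Y : Type*}
    [AddCommGroup X] [Module ℝ X] [UniformSpace X] [IsUniformAddGroup X]
    [ContinuousSMul ℝ X] [LocallyConvexSpace ℝ X]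
    [TopologicalSpace.MetrizableSpace X] [T2Space X] [CompleteSpace X]
    [AddCommGroup Y] [Module ℝ Y] [UniformSpace Y] [IsUniformAddGroup Y]
    [ContinuousSMul ℝ Y] [LocallyConvexSpace ℝ Y]
    [TopologicalSpace.MetrizableSpace Y] [T2Space Y] [CompleteSpace Y]
    (f : X →L[ℝ] Y)
    (h : FiniteDimensional ℝ (Y ⧸ LinearMap.range (f : X →ₗ[ℝ] Y))) :
    IsClosed (LinearMap.range (f : X →ₗ[ℝ] Y) : Set Y) :=
  range_isClosed_of_finiteCodim_general f h
end

section
/- Let X and Y be Fréchet spaces, let f : X → Y be a continuous linear map, and let K be a closed ℝ-subspace of Y containing the range of f. If the quotient vector space K ⧸ (range of f) is finite-dimensional over ℝ, then the range of f is a closed subspace of Y. -/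
/-!
Choose an algebraic complement `C` of `M := f(X)` in `K`; it is finite-dimensional, hence closed
and complete. The map `X × C → K, (x, c) ↦ f x + c` is a continuous linear surjection between
complete metrizable spaces, hence open by the open mapping theorem, whose Banach-space proof
(Baire category, then successive approximation) only uses a countable basis of neighbourhoods of
`0` in place of balls. So the projection `K → C` along `M`, which composed with that map is the
second projection, is continuous, and `M`, its kernel, is closed in `K`, hence in `Y`.
-/

open Filter Topology Set Pointwise Function
open scoped Uniformity

section Baire

variable {𝕜 E F : Type*} [NontriviallyNormedField 𝕜]
  [AddCommGroup E] [Module 𝕜 E] [TopologicalSpace E] [ContinuousSMul 𝕜 E]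
  [AddCommGroup F] [Module 𝕜 F] [TopologicalSpace F] [ContinuousConstSMul 𝕜 F] [BaireSpace F]

theorem LinearMap.nonempty_interior_closure_image_of_surjective (g : E →ₗ[𝕜] F)
    (hg : Surjective g) {V : Set E} (hV : V ∈ 𝓝 0) :
    (interior (closure (g '' V))).Nonempty := by
  obtain ⟨c, hc⟩ := NormedField.exists_one_lt_norm 𝕜
  have hpow : Tendsto (fun n : ℕ ↦ c ^ n) atTop (Bornology.cobounded 𝕜) := by
    rw [← tendsto_norm_atTop_iff_cobounded]
    simpa only [norm_pow] using tendsto_pow_atTop_atTop_of_one_lt hc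
  have hcover : ⋃ n : ℕ, closure (c ^ n • g '' V) = univ := by
    refine eq_univ_of_forall fun y ↦ ?_
    obtain ⟨x, rfl⟩ := hg y
    obtain ⟨n, hn⟩ := (hpow.eventually (absorbent_nhds_zero hV x)).exists
    obtain ⟨v, hv, rfl⟩ := hn rfl
    exact mem_iUnion.2 ⟨n, subset_closure ⟨g v, mem_image_of_mem g hv, (map_smul g _ v).symm⟩⟩
  obtain ⟨n, hn⟩ := nonempty_interior_of_iUnion_of_closed (fun _ ↦ isClosed_closure) hcover
  have hc0 : c ^ n ≠ 0 := pow_ne_zero n (norm_pos_iff.1 (one_pos.trans hc))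
  rw [closure_smul₀' hc0, interior_smul₀ hc0] at hn
  exact smul_set_nonempty.1 hn

theorem LinearMap.closure_image_mem_nhds_zero_of_surjective_s1 [IsTopologicalAddGroup E]
    [IsTopologicalAddGroup F] (g : E →ₗ[𝕜] F)
    (hg : Surjective g) {W : Set E} (hW : W ∈ 𝓝 0) : closure (g '' W) ∈ 𝓝 0 := by
  obtain ⟨V, hV, hVW⟩ := exists_nhds_half_neg hW
  obtain ⟨y, hy⟩ := g.nonempty_interior_closure_image_of_surjective hg hV
  have hsub : ∀ a ∈ closure (g '' V), ∀ b ∈ closure (g '' V), a - b ∈ closure (g '' W) :=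
    fun a ha b hb ↦ map_mem_closure₂ continuous_sub ha hb <| by
      rintro _ ⟨u, hu, rfl⟩ _ ⟨v, hv, rfl⟩
      exact ⟨u - v, hVW u hu v hv, map_sub g u v⟩
  filter_upwards [(isOpen_interior.preimage (continuous_add_const y)).mem_nhds (by simpa using hy)]
    with z hz
  simpa using hsub _ (interior_subset hz) y (interior_subset hy)

end Baire

theorem sum_mem_of_add_self_subset {E : Type*} [AddCommMonoid E] {V : ℕ → Set E}
    (h0 : ∀ n, (0 : E) ∈ V n) (hadd : ∀ n, V (n + 1) + V (n + 1) ⊆ V n) {x : ℕ → E}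
    (hx : ∀ n, x n ∈ V (n + 1)) {t : Finset ℕ} {n : ℕ} (ht : ∀ i ∈ t, n ≤ i) :
    ∑ i ∈ t, x i ∈ V n := by
  have hanti : Antitone V :=
    antitone_nat_of_succ_le fun n y hy ↦ hadd n ⟨y, hy, 0, h0 _, add_zero y⟩
  induction t using Finset.induction_on_min generalizing n with
  | empty => simpa using h0 n
  | insert a s has ih =>
    rw [Finset.sum_insert fun h ↦ (has a h).false]
    exact hanti (ht a (Finset.mem_insert_self a s))
      (hadd a ⟨x a, hx a, _, ih fun i hi ↦ has i hi, rfl⟩)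

theorem exists_hasSum_mem_closure_of_add_self_subset {E : Type*} [AddCommGroup E]
    [UniformSpace E] [IsUniformAddGroup E] [CompleteSpace E] {V : ℕ → Set E}
    (hV : (𝓝 0).HasBasis (fun _ ↦ True) V) (hadd : ∀ n, V (n + 1) + V (n + 1) ⊆ V n)
    {x : ℕ → E} (hx : ∀ n, x n ∈ V (n + 1)) : ∃ a ∈ closure (V 0), HasSum x a := by
  have h0 (n : ℕ) : (0 : E) ∈ V n := mem_of_mem_nhds (hV.mem_of_mem trivial)
  have hsum : Summable x := summable_iff_vanishing.2 fun e he ↦ by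
    obtain ⟨N, -, hN⟩ := hV.mem_iff.1 he
    refine ⟨Finset.range N, fun t ht ↦ hN (sum_mem_of_add_self_subset h0 hadd hx fun i hi ↦ ?_)⟩
    simpa using Finset.disjoint_left.1 ht hi
  refine ⟨_, mem_closure_of_tendsto hsum.hasSum (Eventually.of_forall fun t ↦ ?_), hsum.hasSum⟩
  exact sum_mem_of_add_self_subset h0 hadd hx fun i _ ↦ Nat.zero_le i

theorem exists_seq_sub_sum_mem {E F : Type*} [AddCommGroup F] (g : E → F) {A : ℕ → Set F}
    {V : ℕ → Set E} (hstep : ∀ n, ∀ z ∈ A n, ∃ x ∈ V n, z - g x ∈ A (n + 1)) {y : F}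
    (hy : y ∈ A 0) :
    ∃ x : ℕ → E, (∀ n, x n ∈ V n) ∧ ∀ n, y - ∑ i ∈ Finset.range n, g (x i) ∈ A n := by
  have : Nonempty E := ⟨(hstep 0 y hy).choose⟩
  choose! c hcV hcA using hstep
  let r : ℕ → F := fun n ↦ Nat.rec y (fun n z ↦ z - g (c n z)) n
  have hr (n : ℕ) : r n ∈ A n := by
    induction n with
    | zero => exact hy
    | succ n ih => exact hcA n _ ih
  have hr_eq (n : ℕ) : r n = y - ∑ i ∈ Finset.range n, g (c i (r i)) := by
    induction n with
    | zero => simp [r]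
    | succ n ih =>
      rw [Finset.sum_range_succ, ← sub_sub, ← ih]
  exact ⟨fun n ↦ c n (r n), fun n ↦ hcV n _ (hr n), fun n ↦ hr_eq n ▸ hr n⟩

namespace AddMonoidHom

variable {E F : Type*} [AddCommGroup E] [UniformSpace E] [IsUniformAddGroup E] [CompleteSpace E]
  [AddCommGroup F] [TopologicalSpace F] [IsTopologicalAddGroup F] [FirstCountableTopology F]
  [T2Space F]

theorem image_closure_mem_nhds_zero_of_closure_image_mem_nhds (g : E →+ F) (hg : Continuous g)
    (h : ∀ W ∈ 𝓝 (0 : E), closure (g '' W) ∈ 𝓝 0) {V : ℕ → Set E}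
    (hV : (𝓝 0).HasBasis (fun _ ↦ True) V) (hadd : ∀ n, V (n + 1) + V (n + 1) ⊆ V n) :
    g '' closure (V 0) ∈ 𝓝 0 := by
  obtain ⟨w, hw⟩ := (𝓝 (0 : F)).exists_antitone_basis
  -- The residuals `y - ∑ i < n, g (x i)` are kept in `A n`, so they tend to `0`.
  set A : ℕ → Set F := fun n ↦ closure (g '' V (n + 1)) ∩ w n
  have hA (n : ℕ) : A n ∈ 𝓝 0 := inter_mem (h _ (hV.mem_of_mem trivial)) (hw.mem n)
  have hstep (n : ℕ) : ∀ z ∈ A n, ∃ x ∈ V (n + 1), z - g x ∈ A (n + 1) := by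
    intro z hz
    have hnhds : (z - ·) ⁻¹' A (n + 1) ∈ 𝓝 z :=
      (continuous_sub_left z).continuousAt.preimage_mem_nhds (by simpa using hA (n + 1))
    obtain ⟨_, hzx, x, hx, rfl⟩ := mem_closure_iff_nhds.1 hz.1 _ hnhds
    exact ⟨x, hx, hzx⟩
  refine mem_of_superset (hA 0) fun y hy ↦ ?_
  obtain ⟨x, hxV, hxA⟩ := exists_seq_sub_sum_mem g hstep hy
  obtain ⟨a, ha, hxa⟩ := exists_hasSum_mem_closure_of_add_self_subset hV hadd hxV
  have hsum_a : Tendsto (fun n ↦ ∑ i ∈ Finset.range n, g (x i)) atTop (𝓝 (g a)) :=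
    (hxa.map g hg).tendsto_sum_nat
  have hsum_y : Tendsto (fun n ↦ ∑ i ∈ Finset.range n, g (x i)) atTop (𝓝 y) := by
    simpa using (tendsto_const_nhds (x := y)).sub (hw.tendsto fun n ↦ (hxA n).2)
  exact ⟨a, ha, tendsto_nhds_unique hsum_a hsum_y⟩

theorem isOpenMap_of_closure_image_mem_nhds [FirstCountableTopology E] (g : E →+ F)
    (hg : Continuous g) (h : ∀ W ∈ 𝓝 (0 : E), closure (g '' W) ∈ 𝓝 0) : IsOpenMap g := by
  refine IsTopologicalAddGroup.isOpenMap_iff_nhds_zero.2 fun S hS ↦ ?_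
  obtain ⟨C, hC, hC_closed, hCS⟩ := exists_mem_nhds_isClosed_subset (mem_map.1 hS)
  obtain ⟨u, hu, hadd⟩ := IsTopologicalAddGroup.exists_antitone_basis_nhds_zero E
  obtain ⟨k, hk⟩ := hu.mem_iff.1 hC
  have hshift : (𝓝 0).HasAntitoneBasis fun n ↦ u (n + k) :=
    hu.comp_mono (fun _ _ h ↦ Nat.add_le_add_right h k) (tendsto_add_atTop_nat k)
  refine mem_of_superset (g.image_closure_mem_nhds_zero_of_closure_image_mem_nhds hg h
    hshift.toHasBasis fun n ↦ by simpa only [Nat.add_right_comm] using hadd (n + k)) ?_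
  rw [image_subset_iff]
  exact (hC_closed.closure_subset_iff.2 (by simpa using hk)).trans hCS

end AddMonoidHom

namespace ContinuousLinearMap

variable {𝕜 E F : Type*} [NontriviallyNormedField 𝕜]
  [AddCommGroup E] [Module 𝕜 E] [UniformSpace E] [IsUniformAddGroup E] [ContinuousSMul 𝕜 E]
  [FirstCountableTopology E] [CompleteSpace E]

theorem isOpenMap_of_surjective_of_baireSpace [AddCommGroup F] [Module 𝕜 F] [TopologicalSpace F]
    [IsTopologicalAddGroup F] [ContinuousConstSMul 𝕜 F] [FirstCountableTopology F] [T2Space F]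
    [BaireSpace F] (f : E →L[𝕜] F) (hf : Surjective f) : IsOpenMap f :=
  (f : E →ₗ[𝕜] F).toAddMonoidHom.isOpenMap_of_closure_image_mem_nhds f.continuous
    fun _ hW ↦ (f : E →ₗ[𝕜] F).closure_image_mem_nhds_zero_of_surjective_s1 hf hW

theorem isClosed_range_of_finiteDimensional_quotient [CompleteSpace 𝕜] [AddCommGroup F]
    [Module 𝕜 F] [UniformSpace F] [IsUniformAddGroup F] [ContinuousSMul 𝕜 F]
    [FirstCountableTopology F] [T2Space F] [CompleteSpace F] (f : E →L[𝕜] F)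
    [FiniteDimensional 𝕜 (F ⧸ LinearMap.range (f : E →ₗ[𝕜] F))] :
    IsClosed (LinearMap.range (f : E →ₗ[𝕜] F) : Set F) := by
  have : (𝓤 F).IsCountablyGenerated := IsUniformAddGroup.uniformity_countably_generated
  set M := LinearMap.range (f : E →ₗ[𝕜] F)
  obtain ⟨C, hC⟩ := M.exists_isCompl
  have : FiniteDimensional 𝕜 C := (M.quotientEquivOfIsCompl C hC).finiteDimensional
  have : CompleteSpace C := C.closed_of_finiteDimensional.completeSpace_coe
  have : IsUniformAddGroup C := C.toAddSubgroup.isUniformAddGroup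
  have : FirstCountableTopology C := inferInstanceAs (FirstCountableTopology (C : Set F))
  let g : E × C →L[𝕜] F := f.coprod C.subtypeL
  have hg : Surjective g := fun y ↦ by
    obtain ⟨_, ⟨x, rfl⟩, c, hc, rfl⟩ :=
      Submodule.mem_sup.1 (hC.sup_eq_top ▸ Submodule.mem_top (x := y))
    exact ⟨(x, ⟨c, hc⟩), rfl⟩
  let P : F →ₗ[𝕜] C := C.projectionOnto M hC.symm
  have hPg : P ∘ g = Prod.snd := funext fun ⟨x, c⟩ ↦ by simp [g, P, M]
  have hP : Continuous P :=
    ((g.isOpenMap_of_surjective_of_baireSpace hg).isQuotientMap g.continuous hg).continuous_iff.2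
      (hPg ▸ continuous_snd)
  rw [← Submodule.ker_projectionOnto hC.symm]
  exact isClosed_singleton.preimage hP

end ContinuousLinearMap

theorem range_isClosed_of_finiteCodim_in_closed_subspace_general
    {X Y : Type*}
    [AddCommGroup X] [Module ℝ X] [UniformSpace X] [IsUniformAddGroup X]
    [ContinuousSMul ℝ X]
    [TopologicalSpace.MetrizableSpace X] [CompleteSpace X]
    [AddCommGroup Y] [Module ℝ Y] [UniformSpace Y] [IsUniformAddGroup Y]
    [ContinuousSMul ℝ Y]
    [TopologicalSpace.MetrizableSpace Y] [CompleteSpace Y]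
    (f : X →L[ℝ] Y) (K : Submodule ℝ Y)
    (hKclosed : IsClosed (K : Set Y))
    (hKrange : LinearMap.range (f : X →ₗ[ℝ] Y) ≤ K)
    (h : FiniteDimensional ℝ
      (K ⧸ (LinearMap.range (f : X →ₗ[ℝ] Y)).comap K.subtype)) :
    IsClosed (LinearMap.range (f : X →ₗ[ℝ] Y) : Set Y) := by
  have : CompleteSpace K := hKclosed.completeSpace_coe
  have : IsUniformAddGroup K := K.toAddSubgroup.isUniformAddGroup
  have : FirstCountableTopology K := inferInstanceAs (FirstCountableTopology (K : Set Y))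
  let fK : X →L[ℝ] K := f.codRestrict K fun x ↦ hKrange ⟨x, rfl⟩
  have hfK : LinearMap.range (fK : X →ₗ[ℝ] K) =
      (LinearMap.range (f : X →ₗ[ℝ] Y)).comap K.subtype :=
    LinearMap.range_codRestrict _ _ _
  have : FiniteDimensional ℝ (K ⧸ LinearMap.range (fK : X →ₗ[ℝ] K)) := hfK ▸ h
  convert fK.isClosed_range_of_finiteDimensional_quotient.trans hKclosed using 1
  rw [hfK]
  exact (image_preimage_eq_of_subset fun y hy ↦ ⟨⟨y, hKrange hy⟩, rfl⟩).symm

/-- Let `X`, `Y` be Fréchet spaces (locally convex, metrizable, Hausdorff,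
complete topological vector spaces over ℝ), `f : X → Y` a continuous linear
map, and `K` a closed ℝ-subspace of `Y` containing the range of `f`.
If the quotient `K ⧸ (range f)` is finite-dimensional over ℝ, then the
range of `f` is closed in `Y`. -/
theorem range_isClosed_of_finiteCodim_in_closed_subspace
    {X Y : Type*}
    [AddCommGroup X] [Module ℝ X] [UniformSpace X] [IsUniformAddGroup X]
    [ContinuousSMul ℝ X] [LocallyConvexSpace ℝ X]
    [TopologicalSpace.MetrizableSpace X] [T2Space X] [CompleteSpace X]
    [AddCommGroup Y] [Module ℝ Y] [UniformSpace Y] [IsUniformAddGroup Y]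
    [ContinuousSMul ℝ Y] [LocallyConvexSpace ℝ Y]
    [TopologicalSpace.MetrizableSpace Y] [T2Space Y] [CompleteSpace Y]
    (f : X →L[ℝ] Y) (K : Submodule ℝ Y)
    (hKclosed : IsClosed (K : Set Y))
    (hKrange : LinearMap.range (f : X →ₗ[ℝ] Y) ≤ K)
    (h : FiniteDimensional ℝ
      (K ⧸ (LinearMap.range (f : X →ₗ[ℝ] Y)).comap K.subtype)) :
    IsClosed (LinearMap.range (f : X →ₗ[ℝ] Y) : Set Y) :=
  range_isClosed_of_finiteCodim_in_closed_subspace_general f K hKclosed hKrange h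
end
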